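/- Let Π be a Markov kernel on X satisfying the minorization Π(x, dy) ≥ ε ν(dy) for all x, with ε ∈ (0,1) and probability measure ν, and let π be its invariant probability measure. Define the residual kernel R(x,dy) := (Π(x,dy) - εν(dy))/(1-ε). Then π admits the mixture representation π(dx) = Σ_{n=1}^∞ ε(1-ε)^{n-1} (νR^{n-1})(dx). -/

import Mathlib

open MeasureTheory ProbabilityTheory Filter Topology
open scoped ENNReal

/-!
Splitting `Π = ε ν + (1 - ε) R` turns invariance of `π` into the fixed-point equation
`π = ε ν + (1 - ε) π R`. Iterating it `n` times gives
`π = ∑_{k < n} ε (1 - ε)^k ν R^k + (1 - ε)^n π R^n`, and the remainder has mass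
`(1 - ε)^n → 0`.
-/

/-- The distribution ν R^n after n steps of the kernel R started from ν. -/
noncomputable def iterBind {X : Type*} [MeasurableSpace X]
    (ν : Measure X) (R : Kernel X X) : ℕ → Measure X
  | 0 => ν
  | n + 1 => (iterBind ν R n).bind (fun x => R x)

theorem ENNReal.eq_tsum_of_eq_sum_add {x : ℝ≥0∞} {f r : ℕ → ℝ≥0∞}
    (h : ∀ n, x = ∑ k ∈ Finset.range n, f k + r n) (hr : Tendsto r atTop (𝓝 0)) :
    x = ∑' k, f k := by
  have hlim : Tendsto (fun n => ∑ k ∈ Finset.range n, f k + r n) atTop (𝓝 (∑' k, f k + 0)) :=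
    (ENNReal.tendsto_nat_tsum f).add hr
  rw [add_zero, ← funext h] at hlim
  exact tendsto_nhds_unique tendsto_const_nhds hlim

section IterBind

variable {X : Type*} [MeasurableSpace X] (R : Kernel X X)

theorem iterBind_succ' (μ : Measure X) (n : ℕ) :
    iterBind μ R (n + 1) = iterBind (μ.bind (fun x => R x)) R n := by
  induction n with
  | zero => rfl
  | succ n ih => exact congrArg (Measure.bind · (fun x => R x)) ih

theorem iterBind_add (μ₁ μ₂ : Measure X) (n : ℕ) :
    iterBind (μ₁ + μ₂) R n = iterBind μ₁ R n + iterBind μ₂ R n := by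
  induction n with
  | zero => rfl
  | succ n ih => exact (congrArg (Measure.bind · R) ih).trans Measure.comp_add

theorem iterBind_smul (c : ℝ≥0∞) (μ : Measure X) (n : ℕ) :
    iterBind (c • μ) R n = c • iterBind μ R n := by
  induction n with
  | zero => rfl
  | succ n ih => exact (congrArg (Measure.bind · R) ih).trans (Measure.comp_smul c)

theorem iterBind_apply_univ [IsMarkovKernel R] (μ : Measure X) (n : ℕ) :
    iterBind μ R n Set.univ = μ Set.univ := by
  induction n with
  | zero => rfl
  | succ n ih =>
    rw [iterBind, Measure.bind_apply MeasurableSet.univ R.aemeasurable]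
    simp [ih]

end IterBind

section Mixture

variable {X : Type*} [MeasurableSpace X]

theorem Measure.bind_eq_smul_add_smul_bind (K R : Kernel X X) (ν μ : Measure X)
    [IsProbabilityMeasure μ] (a b : ℝ≥0∞)
    (hdec : ∀ x A, MeasurableSet A → K x A = a * ν A + b * R x A) :
    μ.bind (fun x => K x) = a • ν + b • μ.bind (fun x => R x) := by
  ext A hA
  rw [Measure.bind_apply hA K.aemeasurable, Measure.add_apply, Measure.smul_apply,
    Measure.smul_apply, Measure.bind_apply hA R.aemeasurable, smul_eq_mul, smul_eq_mul]
  calc ∫⁻ x, K x A ∂μ = ∫⁻ x, a * ν A + b * R x A ∂μ := lintegral_congr fun x => hdec x A hA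
    _ = a * ν A + b * ∫⁻ x, R x A ∂μ := by
      rw [lintegral_add_left measurable_const, lintegral_const, measure_univ, mul_one,
        lintegral_const_mul _ (R.measurable_coe hA)]

theorem eq_sum_iterBind_add_of_eq_smul_add_smul_bind {R : Kernel X X} {ν π : Measure X}
    {a b : ℝ≥0∞} (hfix : π = a • ν + b • π.bind (fun x => R x)) (n : ℕ) :
    π = ∑ k ∈ Finset.range n, (a * b ^ k) • iterBind ν R k + b ^ n • iterBind π R n := by
  induction n with
  | zero => simp [iterBind]
  | succ n ih =>
    have hstep : iterBind π R n = a • iterBind ν R n + b • iterBind π R (n + 1) := by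
      conv_lhs => rw [hfix]
      rw [iterBind_add, iterBind_smul, iterBind_smul, iterBind_succ']
    calc π = ∑ k ∈ Finset.range n, (a * b ^ k) • iterBind ν R k + b ^ n • iterBind π R n := ih
      _ = ∑ k ∈ Finset.range n, (a * b ^ k) • iterBind ν R k
          + b ^ n • (a • iterBind ν R n + b • iterBind π R (n + 1)) := by rw [← hstep]
      _ = _ := by
        rw [Finset.sum_range_succ, smul_add, smul_smul, smul_smul, add_assoc, pow_succ,
          mul_comm _ a]

theorem eq_sum_iterBind_of_eq_smul_add_smul_bind {R : Kernel X X} [IsMarkovKernel R]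
    {ν π : Measure X} [IsFiniteMeasure π] {a b : ℝ≥0∞} (hb : b < 1)
    (hfix : π = a • ν + b • π.bind (fun x => R x)) :
    π = Measure.sum fun n => (a * b ^ n) • iterBind ν R n := by
  ext A hA
  rw [Measure.sum_apply _ hA]
  refine ENNReal.eq_tsum_of_eq_sum_add (r := fun n => b ^ n * iterBind π R n A) (fun n => ?_) ?_
  · conv_lhs => rw [eq_sum_iterBind_add_of_eq_smul_add_smul_bind hfix n]
    simp
  · have hbound : ∀ n, b ^ n * iterBind π R n A ≤ b ^ n * π Set.univ := fun n => by
      rw [← iterBind_apply_univ R π n]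
      exact mul_le_mul_right (measure_mono (Set.subset_univ A)) _
    have hlim := ENNReal.Tendsto.mul_const (ENNReal.tendsto_pow_atTop_nhds_zero_of_lt_one hb)
      (Or.inr (measure_ne_top π Set.univ))
    rw [zero_mul] at hlim
    exact tendsto_of_tendsto_of_tendsto_of_le_of_le tendsto_const_nhds hlim
      (fun _ => zero_le) hbound

end Mixture

theorem stmt_13_general {X : Type*} [MeasurableSpace X]
    (K R : Kernel X X) [IsMarkovKernel R]
    (ν π : Measure X) [IsProbabilityMeasure π]
    (ε : ℝ) (hε0 : 0 < ε) (hε1 : ε < 1)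
    (hdec : ∀ x A, MeasurableSet A →
      K x A = ENNReal.ofReal ε * ν A + ENNReal.ofReal (1 - ε) * R x A)
    (hinv : π.bind (fun x => K x) = π) :
    ∀ A, MeasurableSet A →
      π A = ∑' n : ℕ, ENNReal.ofReal (ε * (1 - ε) ^ n) * iterBind ν R n A := by
  intro A hA
  have hb : ENNReal.ofReal (1 - ε) < 1 := ENNReal.ofReal_lt_one.mpr (by linarith)
  have hfix := hinv ▸ Measure.bind_eq_smul_add_smul_bind K R ν π _ _ hdec
  rw [eq_sum_iterBind_of_eq_smul_add_smul_bind hb hfix, Measure.sum_apply _ hA]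
  congr! 2 with n
  rw [ENNReal.ofReal_mul hε0.le, ENNReal.ofReal_pow (by linarith), Measure.smul_apply,
    smul_eq_mul]

/-- if Π(x,·) = εν + (1-ε)R(x,·) with π invariant for Π, then π admits
the mixture representation π = ∑_{n≥1} ε(1-ε)^{n-1} ν R^{n-1} (here indexed from n = 0). -/
theorem stmt_13 {X : Type*} [MeasurableSpace X]
    (K R : Kernel X X) [IsMarkovKernel K] [IsMarkovKernel R]
    (ν π : Measure X) [IsProbabilityMeasure ν] [IsProbabilityMeasure π]
    (ε : ℝ) (hε0 : 0 < ε) (hε1 : ε < 1)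
    (hdec : ∀ x A, MeasurableSet A →
      K x A = ENNReal.ofReal ε * ν A + ENNReal.ofReal (1 - ε) * R x A)
    (hinv : π.bind (fun x => K x) = π) :
    ∀ A, MeasurableSet A →
      π A = ∑' n : ℕ, ENNReal.ofReal (ε * (1 - ε) ^ n) * iterBind ν R n A :=
  stmt_13_general K R ν π ε hε0 hε1 hdec hinv
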